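/- arXiv:1510.05380 — 3 statements merged into one kernel-verified Lean document; each statement's English description precedes it below -/
import Mathlib

section
/- (Lemma 3.1, existence part.) Let S0 be a q×q real matrix with spectral radius L = ρ(S0) > 0, and let H be an N×N real matrix such that 0 is not a complex eigenvalue of H. For each complex eigenvalue h of H, write a = Re h, b = Im h, and Δ(h) = (a²+b²)/L² − b². Then there exists a real number μ such that the matrix I_N⊗S0 − μ(H⊗S0) is Schur if and only if (i) Δ(h) > 0 for every complex eigenvalue h of H, and (ii) the maximum over the complex eigenvalues h of H of (Re h − √Δ(h))/|h|² is strictly less than the minimum over the complex eigenvalues h of H of (Re h + √Δ(h))/|h|². -/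
/-!
Over `ℂ`, `A ⊗ B = (A ⊗ 1)(1 ⊗ B)` is a product of commuting factors, so its eigenvalues are the
products `x * y` of eigenvalues of `A` and `B`. Hence the eigenvalues of
`I ⊗ S0 - μ (H ⊗ S0) = (I - μ H) ⊗ S0` are the products `(1 - μ h) s`, and the matrix is Schur iff
`|1 - μ h| L < 1` for every eigenvalue `h` of `H`. For `h ≠ 0` this says that `μ |h|² - Re h`
lies strictly between `± √Δ(h)`, i.e. that `μ` lies in an open interval depending on `h`;
finitely many such intervals meet iff the largest left end is below the smallest right end.
-/

open Matrix Kronecker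

/-- The complex eigenvalues (spectrum of the complexification) of a real square matrix. -/
def specC {ι : Type} [Fintype ι] [DecidableEq ι] (M : Matrix ι ι ℝ) : Set ℂ :=
  spectrum ℂ (M.map (fun x => (x : ℂ)))

/-- A real square matrix is Schur if all its complex eigenvalues have modulus `< 1`. -/
def IsSchur {ι : Type} [Fintype ι] [DecidableEq ι] (M : Matrix ι ι ℝ) : Prop :=
  ∀ z ∈ specC M, ‖z‖ < 1

namespace Module.End

variable {K V : Type*} [Field K] [IsAlgClosed K] [AddCommGroup V] [Module K V]
  [FiniteDimensional K V]

theorem spectrum_mul_subset_of_commute {f g : End K V} (hfg : Commute f g) :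
    spectrum K (f * g) ⊆ Set.image2 (· * ·) (spectrum K f) (spectrum K g) := by
  -- `g` preserves the `z`-eigenspace of `f * g`; an eigenvector `w` of `g` in it, with `g w = y w`,
  -- satisfies `y • f w = z • w`, so it is an eigenvector of `f` with eigenvalue `z / y` if `y ≠ 0`.
  intro z hz
  rw [← hasEigenvalue_iff_mem_spectrum] at hz
  have hmaps : Set.MapsTo g (eigenspace (f * g) z) (eigenspace (f * g) z) :=
    mapsTo_genEigenspace_of_comm (hfg.mul_left (Commute.refl g)) z 1
  have : Nontrivial (eigenspace (f * g) z) := Submodule.nontrivial_iff_ne_bot.mpr hz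
  obtain ⟨y, hy⟩ := exists_eigenvalue (g.restrict hmaps)
  obtain ⟨⟨w, hwz⟩, hw⟩ := hy.exists_hasEigenvector
  have hw0 : w ≠ 0 := fun h => hw.2 (Subtype.ext h)
  have hgw : g w = y • w := congrArg Subtype.val hw.apply_eq_smul
  have hfw : y • f w = z • w := by
    rw [← map_smul, ← hgw]; exact mem_eigenspace_iff.mp hwz
  have : Nontrivial V := ⟨⟨w, 0, hw0⟩⟩
  have hy_mem : y ∈ spectrum K g :=
    (hasEigenvalue_of_hasEigenvector ⟨mem_eigenspace_iff.mpr hgw, hw0⟩).mem_spectrum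
  rcases eq_or_ne y 0 with rfl | hy0
  · obtain ⟨x, hx⟩ := spectrum.nonempty_of_isAlgClosed_of_finiteDimensional K f
    have hz0 : z = 0 := by simpa [hw0] using hfw.symm
    exact ⟨x, hx, 0, hy_mem, by simp [hz0]⟩
  · refine ⟨z / y, ?_, y, hy_mem, div_mul_cancel₀ z hy0⟩
    have hfw' : f w = (z / y) • w := by
      rw [div_eq_inv_mul, mul_smul, ← hfw, smul_smul, inv_mul_cancel₀ hy0, one_smul]
    exact (hasEigenvalue_of_hasEigenvector ⟨mem_eigenspace_iff.mpr hfw', hw0⟩).mem_spectrum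

end Module.End

namespace Matrix

variable {K : Type*} [Field K] {m n : Type*} [Fintype m] [DecidableEq m] [Fintype n] [DecidableEq n]

theorem mem_spectrum_iff_exists_mulVec_eq_smul {A : Matrix n n K} {x : K} :
    x ∈ spectrum K A ↔ ∃ v ≠ 0, A *ᵥ v = x • v := by
  rw [← spectrum_toLin', ← Module.End.hasEigenvalue_iff_mem_spectrum,
    Module.End.hasEigenvalue_iff, Submodule.ne_bot_iff]
  simp only [Module.End.mem_eigenspace_iff, toLin'_apply]
  exact exists_congr fun v => and_comm

theorem spectrum_kronecker_one_subset (A : Matrix m m K) :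
    spectrum K (A ⊗ₖ (1 : Matrix n n K)) ⊆ spectrum K A := by
  intro x
  simp only [spectrum.mem_iff, Algebra.algebraMap_eq_smul_one]
  refine mt fun hxA => ?_
  have := hxA.kronecker (isUnit_one (M := Matrix n n K))
  rwa [sub_eq_add_neg, add_kronecker, smul_kronecker,
    one_kronecker_one, ← neg_one_smul K A, smul_kronecker, neg_one_smul, ← sub_eq_add_neg] at this

theorem spectrum_one_kronecker_subset (B : Matrix n n K) :
    spectrum K ((1 : Matrix m m K) ⊗ₖ B) ⊆ spectrum K B := by
  intro y
  simp only [spectrum.mem_iff, Algebra.algebraMap_eq_smul_one]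
  refine mt fun hyB => ?_
  have := (isUnit_one (M := Matrix m m K)).kronecker hyB
  rwa [sub_eq_add_neg, kronecker_add, kronecker_smul,
    one_kronecker_one, ← neg_one_smul K B, kronecker_smul, neg_one_smul, ← sub_eq_add_neg] at this

theorem mul_mem_spectrum_kronecker {A : Matrix m m K} {B : Matrix n n K} {x y : K}
    (hx : x ∈ spectrum K A) (hy : y ∈ spectrum K B) : x * y ∈ spectrum K (A ⊗ₖ B) := by
  obtain ⟨v, hv, hAv⟩ := mem_spectrum_iff_exists_mulVec_eq_smul.mp hx
  obtain ⟨w, hw, hBw⟩ := mem_spectrum_iff_exists_mulVec_eq_smul.mp hy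
  refine mem_spectrum_iff_exists_mulVec_eq_smul.mpr ⟨vec (vecMulVec w v), ?_, ?_⟩
  · obtain ⟨i, hi⟩ := Function.ne_iff.mp hw
    obtain ⟨j, hj⟩ := Function.ne_iff.mp hv
    exact fun h => mul_ne_zero hi hj (congrFun h (j, i))
  · rw [kronecker_mulVec_vec, mul_vecMulVec, vecMulVec_mul, vecMul_transpose, hAv, hBw,
      smul_vecMulVec, vecMulVec_smul, smul_smul, vec_smul, mul_comm]

variable [IsAlgClosed K]

theorem spectrum_kronecker (A : Matrix m m K) (B : Matrix n n K) :
    spectrum K (A ⊗ₖ B) = Set.image2 (· * ·) (spectrum K A) (spectrum K B) := by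
  refine subset_antisymm ?_ (Set.image2_subset_iff.mpr fun x hx y hy =>
    mul_mem_spectrum_kronecker hx hy)
  have hAB : A ⊗ₖ B = (A ⊗ₖ 1) * (1 ⊗ₖ B) := by
    rw [← mul_kronecker_mul, Matrix.mul_one, Matrix.one_mul]
  have hcomm : Commute (A ⊗ₖ (1 : Matrix n n K)) ((1 : Matrix m m K) ⊗ₖ B) := by
    rw [Commute, SemiconjBy, ← mul_kronecker_mul, ← mul_kronecker_mul]
    simp
  have hsub := Module.End.spectrum_mul_subset_of_commute (hcomm.map toLinAlgEquiv')
  simp only [← map_mul, AlgEquiv.spectrum_eq] at hsub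
  rw [hAB]
  exact hsub.trans (Set.image2_subset (spectrum_kronecker_one_subset A)
    (spectrum_one_kronecker_subset B))

end Matrix

theorem spectrum.one_sub_smul_eq_image {K A : Type*} [Field K] [IsAlgClosed K] [Ring A]
    [Algebra K A] {a : A} (ha : (spectrum K a).Nonempty) (μ : K) :
    spectrum K (1 - μ • a) = (fun h => 1 - μ * h) '' spectrum K a := by
  open Polynomial in
  have := spectrum.map_polynomial_aeval_of_nonempty a (1 - C μ * X) ha
  simp only [map_sub, map_one, map_mul, aeval_C, aeval_X, eval_sub, eval_one, eval_mul, eval_C,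
    eval_X] at this
  rwa [Algebra.smul_def]

theorem map_ofReal_one_kronecker_sub_smul_kronecker {ι κ : Type*} [Fintype ι] [DecidableEq ι]
    (H : Matrix ι ι ℝ) (S : Matrix κ κ ℝ) (μ : ℝ) :
    (1 ⊗ₖ S - μ • (H ⊗ₖ S)).map (fun x => (x : ℂ)) =
      (1 - (μ : ℂ) • H.map (fun x => (x : ℂ))) ⊗ₖ S.map (fun x => (x : ℂ)) := by
  ext ⟨i, k⟩ ⟨j, l⟩
  simp only [map_apply, Matrix.sub_apply, Matrix.smul_apply, kronecker_apply, one_apply,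
    smul_eq_mul]
  split_ifs <;> push_cast <;> ring

theorem specC_one_kronecker_sub_smul_kronecker {ι κ : Type} [Fintype ι] [DecidableEq ι]
    [Nonempty ι] [Fintype κ] [DecidableEq κ] (H : Matrix ι ι ℝ) (S : Matrix κ κ ℝ) (μ : ℝ) :
    specC (1 ⊗ₖ S - μ • (H ⊗ₖ S)) =
      Set.image2 (fun h s => (1 - (μ : ℂ) * h) * s) (specC H) (specC S) := by
  rw [specC, map_ofReal_one_kronecker_sub_smul_kronecker, spectrum_kronecker,
    spectrum.one_sub_smul_eq_image (spectrum.nonempty_of_isAlgClosed_of_finiteDimensional ℂ _),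
    Set.image2_image_left]
  rfl

theorem forall_mem_norm_mul_lt_one_iff {α : Type*} [NormedDivisionRing α] {S : Set α} {L : ℝ}
    (hL : IsGreatest ((‖·‖) '' S) L) (c : α) : (∀ s ∈ S, ‖c * s‖ < 1) ↔ ‖c‖ * L < 1 := by
  obtain ⟨⟨s₀, hs₀, rfl⟩, hmax⟩ := hL
  refine ⟨fun h => by simpa only [norm_mul] using h s₀ hs₀, fun h s hs => ?_⟩
  rw [norm_mul]
  exact (mul_le_mul_of_nonneg_left (hmax ⟨s, hs, rfl⟩) (norm_nonneg c)).trans_lt h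

theorem Set.Finite.exists_forall_mem_between_iff {α β : Type*}
    [ConditionallyCompleteLinearOrder β] [DenselyOrdered β] {S : Set α} (hS : S.Finite)
    (hne : S.Nonempty) (f g : α → β) :
    (∃ μ, ∀ x ∈ S, f x < μ ∧ μ < g x) ↔ sSup (f '' S) < sInf (g '' S) := by
  constructor
  · rintro ⟨μ, hμ⟩
    obtain ⟨x, hx, hfx⟩ := (hne.image f).csSup_mem (hS.image f)
    obtain ⟨y, hy, hgy⟩ := (hne.image g).csInf_mem (hS.image g)
    rw [← hfx, ← hgy]
    exact (hμ x hx).1.trans (hμ y hy).2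
  · intro hlt
    obtain ⟨μ, hfμ, hμg⟩ := _root_.exists_between hlt
    exact ⟨μ, fun x hx => ⟨(le_csSup (hS.image f).bddAbove ⟨x, hx, rfl⟩).trans_lt hfμ,
      hμg.trans_le (csInf_le (hS.image g).bddBelow ⟨x, hx, rfl⟩)⟩⟩

section Gain

variable (L : ℝ) (h : ℂ)

/-- `Δ(h)` of the paper. -/
noncomputable def gainMargin : ℝ := (h.re ^ 2 + h.im ^ 2) / L ^ 2 - h.im ^ 2

noncomputable def gainLower : ℝ := (h.re - √(gainMargin L h)) / (h.re ^ 2 + h.im ^ 2)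

noncomputable def gainUpper : ℝ := (h.re + √(gainMargin L h)) / (h.re ^ 2 + h.im ^ 2)

variable {L h}

theorem gainMargin_pos_of_gainLower_lt_gainUpper (hlt : gainLower L h < gainUpper L h) :
    0 < gainMargin L h := by
  by_contra hΔ
  rw [gainLower, gainUpper, Real.sqrt_eq_zero'.mpr (not_lt.mp hΔ), sub_zero, add_zero] at hlt
  exact lt_irrefl _ hlt

theorem norm_one_sub_mul_mul_lt_one_iff (hL : 0 < L) (hh : h ≠ 0) (μ : ℝ) :
    ‖1 - μ * h‖ * L < 1 ↔ gainLower L h < μ ∧ μ < gainUpper L h := by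
  set r := h.re ^ 2 + h.im ^ 2
  have hr : 0 < r := by
    have := Complex.normSq_pos.mpr hh
    rw [Complex.normSq_apply] at this
    linarith
  have hnorm : ‖1 - (μ : ℂ) * h‖ ^ 2 = (1 - μ * h.re) ^ 2 + (μ * h.im) ^ 2 := by
    rw [Complex.sq_norm, Complex.normSq_apply]
    simp only [Complex.sub_re, Complex.sub_im, Complex.one_re, Complex.one_im, Complex.mul_re,
      Complex.mul_im, Complex.ofReal_re, Complex.ofReal_im]
    ring
  -- completing the square in `μ`
  have hsq : (μ * r - h.re) ^ 2 + h.im ^ 2 = r * ((1 - μ * h.re) ^ 2 + (μ * h.im) ^ 2) := by ring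
  have hquad : ‖1 - μ * h‖ * L < 1 ↔ (μ * r - h.re) ^ 2 < gainMargin L h := by
    rw [← sq_lt_one_iff₀ (by positivity), mul_pow, hnorm, gainMargin, lt_sub_iff_add_lt,
      lt_div_iff₀ (by positivity), hsq, mul_assoc, mul_lt_iff_lt_one_right hr]
  rw [hquad, Real.sq_lt, gainLower, gainUpper, div_lt_iff₀ hr, lt_div_iff₀ hr]
  constructor <;> rintro ⟨h₁, h₂⟩ <;> constructor <;> linarith

end Gain

theorem observer_gain_exists_iff_general (N q : ℕ) (hN : 0 < N)
    (S0 : Matrix (Fin q) (Fin q) ℝ) (H : Matrix (Fin N) (Fin N) ℝ)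
    (L : ℝ) (hL : IsGreatest ((fun z : ℂ => ‖z‖) '' specC S0) L) (hLpos : 0 < L)
    (hH0 : (0 : ℂ) ∉ specC H) :
    (∃ μ : ℝ, IsSchur ((1 : Matrix (Fin N) (Fin N) ℝ) ⊗ₖ S0 - μ • (H ⊗ₖ S0))) ↔
      ((∀ h ∈ specC H, 0 < (h.re ^ 2 + h.im ^ 2) / L ^ 2 - h.im ^ 2) ∧
        sSup ((fun h : ℂ =>
            (h.re - Real.sqrt ((h.re ^ 2 + h.im ^ 2) / L ^ 2 - h.im ^ 2)) /
              (h.re ^ 2 + h.im ^ 2)) '' specC H) <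
          sInf ((fun h : ℂ =>
            (h.re + Real.sqrt ((h.re ^ 2 + h.im ^ 2) / L ^ 2 - h.im ^ 2)) /
              (h.re ^ 2 + h.im ^ 2)) '' specC H)) := by
  have : Nonempty (Fin N) := Fin.pos_iff_nonempty.mp hN
  have hne : (specC H).Nonempty :=
    spectrum.nonempty_of_isAlgClosed_of_finiteDimensional ℂ (H.map (fun x => (x : ℂ)))
  have hfin : (specC H).Finite := Matrix.finite_spectrum _
  have hschur (μ : ℝ) : IsSchur ((1 : Matrix (Fin N) (Fin N) ℝ) ⊗ₖ S0 - μ • (H ⊗ₖ S0)) ↔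
      ∀ h ∈ specC H, gainLower L h < μ ∧ μ < gainUpper L h := by
    rw [IsSchur, specC_one_kronecker_sub_smul_kronecker, Set.forall_mem_image2]
    refine forall₂_congr fun h hh => ?_
    rw [forall_mem_norm_mul_lt_one_iff hL,
      norm_one_sub_mul_mul_lt_one_iff hLpos (ne_of_mem_of_not_mem hh hH0)]
  change _ ↔ (∀ h ∈ specC H, 0 < gainMargin L h) ∧
    sSup (gainLower L '' specC H) < sInf (gainUpper L '' specC H)
  rw [exists_congr hschur, hfin.exists_forall_mem_between_iff hne]
  refine ⟨fun hlt => ⟨fun h hh => gainMargin_pos_of_gainLower_lt_gainUpper ?_, hlt⟩, And.right⟩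
  exact (le_csSup (hfin.image _).bddAbove ⟨h, hh, rfl⟩).trans_lt
    (hlt.trans_le (csInf_le (hfin.image _).bddBelow ⟨h, hh, rfl⟩))

/-- **Lemma 3.1, existence part.** With `L = ρ(S0) > 0`, `0 ∉ σ(H)` and
`Δ(h) = (Re h² + Im h²)/L² − (Im h)²`, there is a real `μ` making
`I_N ⊗ S0 − μ (H ⊗ S0)` Schur iff `Δ(h) > 0` for every complex eigenvalue `h` of `H`
and `max_h (Re h − √Δ(h))/|h|² < min_h (Re h + √Δ(h))/|h|²`. -/
theorem observer_gain_exists_iff (N q : ℕ) (hN : 0 < N) (hq : 0 < q)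
    (S0 : Matrix (Fin q) (Fin q) ℝ) (H : Matrix (Fin N) (Fin N) ℝ)
    (L : ℝ) (hL : IsGreatest ((fun z : ℂ => ‖z‖) '' specC S0) L) (hLpos : 0 < L)
    (hH0 : (0 : ℂ) ∉ specC H) :
    (∃ μ : ℝ, IsSchur ((1 : Matrix (Fin N) (Fin N) ℝ) ⊗ₖ S0 - μ • (H ⊗ₖ S0))) ↔
      ((∀ h ∈ specC H, 0 < (h.re ^ 2 + h.im ^ 2) / L ^ 2 - h.im ^ 2) ∧
        sSup ((fun h : ℂ =>
            (h.re - Real.sqrt ((h.re ^ 2 + h.im ^ 2) / L ^ 2 - h.im ^ 2)) /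
              (h.re ^ 2 + h.im ^ 2)) '' specC H) <
          sInf ((fun h : ℂ =>
            (h.re + Real.sqrt ((h.re ^ 2 + h.im ^ 2) / L ^ 2 - h.im ^ 2)) /
              (h.re ^ 2 + h.im ^ 2)) '' specC H)) :=
  observer_gain_exists_iff_general N q hN S0 H L hL hLpos hH0
end

section
/- (Corollary 3.1, case (i).) Let S0 be a q×q real matrix with spectral radius L = ρ(S0) > 0, and let H be an N×N real symmetric positive definite matrix. Then there exists a real μ such that the matrix I_N⊗S0 − μ(H⊗S0) is Schur if and only if the maximum over the (real, positive) eigenvalues a of H of (L−1)/(aL) is strictly less than the minimum over the eigenvalues a of H of (L+1)/(aL); and when this condition holds, I_N⊗S0 − μ(H⊗S0) is Schur for every real μ with max_a (L−1)/(aL) < μ < min_a (L+1)/(aL). -/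
open Matrix Kronecker

/-!
Diagonalising `H` orthogonally, `I ⊗ S0 - μ (H ⊗ S0) = (I - μ H) ⊗ S0` is similar to
`diag (1 - μ aᵢ) ⊗ S0`, a block-diagonal matrix with blocks `(1 - μ aᵢ) S0`. Its complex
eigenvalues are therefore the products `(1 - μ a) s` with `a` an eigenvalue of `H` and `s` one of
`S0`, so the matrix is Schur iff `|1 - μ a| L < 1` for every eigenvalue `a > 0` of `H`, i.e. iff
`μ` lies in each of the finitely many intervals `((L - 1)/(a L), (L + 1)/(a L))`. These have a
common point iff the largest left end point is below the smallest right end point.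
-/

open scoped Pointwise

namespace Matrix

variable {K : Type*} [Field K] {m o : Type*} [Fintype m] [DecidableEq m] [Fintype o] [DecidableEq o]

theorem algebraMap_sub_blockDiagonal (z : K) (M : o → Matrix m m K) :
    algebraMap K _ z - blockDiagonal M = blockDiagonal fun i => algebraMap K _ z - M i := by
  rw [← Pi.sub_def, blockDiagonal_sub]
  congr 1
  simp [algebraMap_eq_diagonal, blockDiagonal_diagonal, Pi.algebraMap_def]

theorem spectrum_blockDiagonal (M : o → Matrix m m K) :
    spectrum K (blockDiagonal M) = ⋃ i, spectrum K (M i) := by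
  ext z
  simp only [Set.mem_iUnion, spectrum.mem_iff, isUnit_iff_isUnit_det,
    algebraMap_sub_blockDiagonal, det_blockDiagonal, IsUnit.prod_univ_iff, not_forall]

theorem spectrum_diagonal_kronecker (d : o → K) (B : Matrix m m K) :
    spectrum K (diagonal d ⊗ₖ B) = ⋃ i, spectrum K (d i • B) := by
  rw [diagonal_kronecker, ← coe_reindexAlgEquiv K K, AlgEquiv.spectrum_eq, spectrum_blockDiagonal]

end Matrix

section Complexification

variable {ι κ : Type} [Fintype ι] [DecidableEq ι] [Fintype κ] [DecidableEq κ]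

theorem specC_units_conj (P : (Matrix ι ι ℝ)ˣ) (M : Matrix ι ι ℝ) :
    specC ((P : Matrix ι ι ℝ) * M * ((P⁻¹ : (Matrix ι ι ℝ)ˣ) : Matrix ι ι ℝ)) = specC M := by
  let φ : Matrix ι ι ℝ →+* Matrix ι ι ℂ := Complex.ofRealHom.mapMatrix
  change spectrum ℂ (φ _) = spectrum ℂ (φ M)
  rw [map_mul, map_mul]
  have h := spectrum.units_conjugate (R := ℂ) (a := φ M) (u := Units.map φ.toMonoidHom P)
  rwa [Units.coe_map, Units.coe_map_inv] at h

theorem specC_diagonal (d : ι → ℝ) : specC (diagonal d) = Set.range fun i => (d i : ℂ) := by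
  simp [specC, diagonal_map]

theorem specC_diagonal_kronecker (d : ι → ℝ) {B : Matrix κ κ ℝ} (hB : (specC B).Nonempty) :
    specC (diagonal d ⊗ₖ B) = ⋃ i, (d i : ℂ) • specC B := by
  have : Nontrivial (Matrix κ κ ℂ) := by
    by_contra h
    rw [not_nontrivial_iff_subsingleton] at h
    simp [specC, spectrum.of_subsingleton] at hB
  have hmap : (diagonal d ⊗ₖ B : Matrix (ι × κ) (ι × κ) ℝ).map (fun x => (x : ℂ)) =
      diagonal (fun i => (d i : ℂ)) ⊗ₖ B.map (fun x => (x : ℂ)) := by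
    ext ⟨i, k⟩ ⟨j, l⟩
    by_cases h : i = j <;> simp [kroneckerMap_apply, h]
  unfold specC at hB ⊢
  rw [hmap, spectrum_diagonal_kronecker]
  exact Set.iUnion_congr fun i => spectrum.smul_eq_smul _ _ hB

theorem specC_units_conj_kronecker (P : (Matrix ι ι ℝ)ˣ) (D : Matrix ι ι ℝ) (B : Matrix κ κ ℝ) :
    specC (((P : Matrix ι ι ℝ) * D * ((P⁻¹ : (Matrix ι ι ℝ)ˣ) : Matrix ι ι ℝ)) ⊗ₖ B) =
      specC (D ⊗ₖ B) := by
  let Q : (Matrix (ι × κ) (ι × κ) ℝ)ˣ :=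
    ⟨(P : Matrix ι ι ℝ) ⊗ₖ 1, ((P⁻¹ : (Matrix ι ι ℝ)ˣ) : Matrix ι ι ℝ) ⊗ₖ 1,
      by rw [← mul_kronecker_mul, P.mul_inv, one_mul, one_kronecker_one],
      by rw [← mul_kronecker_mul, P.inv_mul, one_mul, one_kronecker_one]⟩
  have hQ : ((P : Matrix ι ι ℝ) * D * ((P⁻¹ : (Matrix ι ι ℝ)ˣ) : Matrix ι ι ℝ)) ⊗ₖ B =
      (Q : Matrix (ι × κ) (ι × κ) ℝ) * (D ⊗ₖ B) * ((Q⁻¹ : (Matrix (ι × κ) (ι × κ) ℝ)ˣ) : _) := by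
    simp only [Q, Units.inv_mk, ← mul_kronecker_mul, one_mul, mul_one]
  rw [hQ, specC_units_conj]

theorem isSchur_diagonal_kronecker_iff (d : ι → ℝ) {B : Matrix κ κ ℝ} {L : ℝ}
    (hL : IsGreatest ((fun z : ℂ => ‖z‖) '' specC B) L) :
    IsSchur (diagonal d ⊗ₖ B) ↔ ∀ i, |d i| * L < 1 := by
  obtain ⟨⟨s₀, hs₀, rfl⟩, hmax⟩ := hL
  simp only [IsSchur, specC_diagonal_kronecker d ⟨s₀, hs₀⟩, Set.mem_iUnion, Set.mem_smul_set,
    smul_eq_mul]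
  constructor
  · intro h i
    simpa using h _ ⟨i, s₀, hs₀, rfl⟩
  · rintro h _ ⟨i, s, hs, rfl⟩
    calc ‖(d i : ℂ) * s‖ = |d i| * ‖s‖ := by simp
      _ ≤ |d i| * ‖s₀‖ := by gcongr; exact hmax ⟨s, hs, rfl⟩
      _ < 1 := h i

theorem Matrix.IsHermitian.exists_units_conj_diagonal {H : Matrix ι ι ℝ} (hH : H.IsHermitian) :
    ∃ P : (Matrix ι ι ℝ)ˣ,
      H = (P : Matrix ι ι ℝ) * diagonal hH.eigenvalues *
        ((P⁻¹ : (Matrix ι ι ℝ)ˣ) : Matrix ι ι ℝ) := by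
  refine ⟨Unitary.toUnits hH.eigenvectorUnitary, ?_⟩
  conv_lhs => rw [hH.spectral_theorem]
  simp [RCLike.ofReal_real_eq_id]

theorem Matrix.IsHermitian.specC_eq {H : Matrix ι ι ℝ} (hH : H.IsHermitian) :
    specC H = Set.range fun i => (hH.eigenvalues i : ℂ) := by
  obtain ⟨P, hP⟩ := hH.exists_units_conj_diagonal
  rw [← specC_diagonal, ← specC_units_conj P (diagonal _), ← hP]

theorem isSchur_one_kronecker_sub_smul_kronecker_iff {H : Matrix ι ι ℝ} (hH : H.IsHermitian)
    {B : Matrix κ κ ℝ} {L : ℝ} (hL : IsGreatest ((fun z : ℂ => ‖z‖) '' specC B) L) (μ : ℝ) :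
    IsSchur ((1 : Matrix ι ι ℝ) ⊗ₖ B - μ • (H ⊗ₖ B)) ↔
      ∀ i, |1 - μ * hH.eigenvalues i| * L < 1 := by
  obtain ⟨P, hP⟩ := hH.exists_units_conj_diagonal
  have hconj : (1 : Matrix ι ι ℝ) ⊗ₖ B - μ • (H ⊗ₖ B) =
      ((P : Matrix ι ι ℝ) * diagonal (fun i => 1 - μ * hH.eigenvalues i) *
        ((P⁻¹ : (Matrix ι ι ℝ)ˣ) : Matrix ι ι ℝ)) ⊗ₖ B := by
    have hdiag :
        diagonal (fun i => 1 - μ * hH.eigenvalues i) = 1 - μ • diagonal hH.eigenvalues := by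
      ext i j
      by_cases h : i = j <;> simp [h]
    rw [hdiag, mul_sub, sub_mul, mul_one, P.mul_inv, mul_smul_comm, smul_mul_assoc, ← hP]
    ext ⟨i, k⟩ ⟨j, l⟩
    simp [sub_mul, mul_assoc]
  change (∀ z ∈ specC _, ‖z‖ < 1) ↔ _
  rw [hconj, specC_units_conj_kronecker]
  exact isSchur_diagonal_kronecker_iff _ hL

end Complexification

theorem abs_one_sub_mul_mul_lt_one_iff {L a μ : ℝ} (hL : 0 < L) (ha : 0 < a) :
    |1 - μ * a| * L < 1 ↔ (L - 1) / (a * L) < μ ∧ μ < (L + 1) / (a * L) := by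
  have haL : 0 < a * L := mul_pos ha hL
  rw [div_lt_iff₀ haL, lt_div_iff₀ haL, ← abs_of_pos hL, ← abs_mul, abs_of_pos hL, abs_lt]
  constructor <;> rintro ⟨h₁, h₂⟩ <;> constructor <;> nlinarith

theorem observer_gain_undirected_general (N q : ℕ) (hN : 0 < N)
    (S0 : Matrix (Fin q) (Fin q) ℝ) (H : Matrix (Fin N) (Fin N) ℝ)
    (L : ℝ) (hL : IsGreatest ((fun z : ℂ => ‖z‖) '' specC S0) L) (hLpos : 0 < L)
    (hpd : H.PosDef) :
    ((∃ μ : ℝ, IsSchur ((1 : Matrix (Fin N) (Fin N) ℝ) ⊗ₖ S0 - μ • (H ⊗ₖ S0))) ↔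
      sSup ((fun a : ℝ => (L - 1) / (a * L)) '' {a : ℝ | (a : ℂ) ∈ specC H}) <
        sInf ((fun a : ℝ => (L + 1) / (a * L)) '' {a : ℝ | (a : ℂ) ∈ specC H})) ∧
    (sSup ((fun a : ℝ => (L - 1) / (a * L)) '' {a : ℝ | (a : ℂ) ∈ specC H}) <
        sInf ((fun a : ℝ => (L + 1) / (a * L)) '' {a : ℝ | (a : ℂ) ∈ specC H}) →
      ∀ μ : ℝ,
        sSup ((fun a : ℝ => (L - 1) / (a * L)) '' {a : ℝ | (a : ℂ) ∈ specC H}) < μ →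
        μ < sInf ((fun a : ℝ => (L + 1) / (a * L)) '' {a : ℝ | (a : ℂ) ∈ specC H}) →
        IsSchur ((1 : Matrix (Fin N) (Fin N) ℝ) ⊗ₖ S0 - μ • (H ⊗ₖ S0))) := by
  have : Nonempty (Fin N) := ⟨⟨0, hN⟩⟩
  have heig : {a : ℝ | (a : ℂ) ∈ specC H} = Set.range hpd.isHermitian.eigenvalues := by
    ext a
    simp [hpd.isHermitian.specC_eq]
  have hschur : ∀ μ : ℝ, IsSchur ((1 : Matrix (Fin N) (Fin N) ℝ) ⊗ₖ S0 - μ • (H ⊗ₖ S0)) ↔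
      sSup ((fun a : ℝ => (L - 1) / (a * L)) '' {a : ℝ | (a : ℂ) ∈ specC H}) < μ ∧
        μ < sInf ((fun a : ℝ => (L + 1) / (a * L)) '' {a : ℝ | (a : ℂ) ∈ specC H}) := by
    intro μ
    rw [isSchur_one_kronecker_sub_smul_kronecker_iff hpd.isHermitian hL, heig, ← Set.range_comp,
      ← Set.range_comp, (Set.finite_range _).csSup_lt_iff (Set.range_nonempty _),
      (Set.finite_range _).lt_csInf_iff (Set.range_nonempty _)]
    simp only [Set.forall_mem_range, Function.comp_apply, ← forall_and,
      abs_one_sub_mul_mul_lt_one_iff hLpos (hpd.eigenvalues_pos _)]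
  refine ⟨⟨fun ⟨μ, hμ⟩ => ((hschur μ).1 hμ).elim lt_trans, fun h => ?_⟩,
    fun _ μ h₁ h₂ => (hschur μ).2 ⟨h₁, h₂⟩⟩
  obtain ⟨μ, hμ⟩ := exists_between h
  exact ⟨μ, (hschur μ).2 hμ⟩

/-- **Corollary 3.1, case (i).** With `L = ρ(S0) > 0` and `H` real symmetric
positive definite, a real `μ` making `I_N ⊗ S0 − μ (H ⊗ S0)` Schur exists iff
`max_a (L−1)/(aL) < min_a (L+1)/(aL)`, the max and min ranging over the (real, positive)
eigenvalues `a` of `H`; and when this condition holds, the matrix is Schur for every `μ`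
strictly between this max and this min. -/
theorem observer_gain_undirected (N q : ℕ) (hN : 0 < N) (hq : 0 < q)
    (S0 : Matrix (Fin q) (Fin q) ℝ) (H : Matrix (Fin N) (Fin N) ℝ)
    (L : ℝ) (hL : IsGreatest ((fun z : ℂ => ‖z‖) '' specC S0) L) (hLpos : 0 < L)
    (hsymm : H.IsSymm) (hpd : H.PosDef) :
    ((∃ μ : ℝ, IsSchur ((1 : Matrix (Fin N) (Fin N) ℝ) ⊗ₖ S0 - μ • (H ⊗ₖ S0))) ↔
      sSup ((fun a : ℝ => (L - 1) / (a * L)) '' {a : ℝ | (a : ℂ) ∈ specC H}) <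
        sInf ((fun a : ℝ => (L + 1) / (a * L)) '' {a : ℝ | (a : ℂ) ∈ specC H})) ∧
    (sSup ((fun a : ℝ => (L - 1) / (a * L)) '' {a : ℝ | (a : ℂ) ∈ specC H}) <
        sInf ((fun a : ℝ => (L + 1) / (a * L)) '' {a : ℝ | (a : ℂ) ∈ specC H}) →
      ∀ μ : ℝ,
        sSup ((fun a : ℝ => (L - 1) / (a * L)) '' {a : ℝ | (a : ℂ) ∈ specC H}) < μ →
        μ < sInf ((fun a : ℝ => (L + 1) / (a * L)) '' {a : ℝ | (a : ℂ) ∈ specC H}) →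
        IsSchur ((1 : Matrix (Fin N) (Fin N) ℝ) ⊗ₖ S0 - μ • (H ⊗ₖ S0))) :=
  observer_gain_undirected_general N q hN S0 H L hL hLpos hpd
end

section
/- Let S0 be the 2×2 real matrix diag(1, −1) and let H be any N×N real symmetric positive definite matrix. Then for every real number μ, the matrix I_N⊗S0 − μ(H⊗I_2) has a complex eigenvalue of modulus at least 1; that is, there is no real μ for which I_N⊗S0 − μ(H⊗I_2) is Schur. -/
/-!
If `H v = λ v` with `v ≠ 0` (over `ℂ`), then `v ⊗ e_k` is an eigenvector of
`I ⊗ S0 - μ (H ⊗ I)` with eigenvalue `S0_kk - μ λ`, so both `1 - μλ` and `-1 - μλ` are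
eigenvalues. They are at distance `2` from each other, hence one of them is at distance at least
`1` from `0`.
-/

open Matrix Kronecker

theorem le_dist_or_le_dist_of_two_mul_le_dist {X : Type*} [PseudoMetricSpace X] {x y : X}
    {r : ℝ} (h : 2 * r ≤ dist x y) (z : X) : r ≤ dist x z ∨ r ≤ dist y z := by
  by_contra! hz
  linarith [dist_triangle_right x y z]

namespace Matrix

section Eigenvectors

variable {K n : Type*} [Field K] [Fintype n] [DecidableEq n]

theorem mem_spectrum_of_mulVec_eq_smul {A : Matrix n n K} {a : K} {v : n → K} (hv : v ≠ 0)
    (h : A *ᵥ v = a • v) : a ∈ spectrum K A := by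
  rw [← spectrum_toLin', ← Module.End.hasEigenvalue_iff_mem_spectrum]
  exact Module.End.hasEigenvalue_of_hasEigenvector
    ⟨Module.End.mem_eigenspace_iff.mpr (by rwa [toLin'_apply]), hv⟩

theorem exists_mulVec_eq_smul [IsAlgClosed K] [Nonempty n] (A : Matrix n n K) :
    ∃ a : K, ∃ v ≠ 0, A *ᵥ v = a • v := by
  obtain ⟨a, ha⟩ := Module.End.exists_eigenvalue (toLin' A)
  obtain ⟨v, hv⟩ := ha.exists_hasEigenvector
  exact ⟨a, v, hv.2, by simpa [toLin'_apply] using hv.apply_eq_smul⟩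

end Eigenvectors

theorem kronecker_vec_ne_zero {R m p : Type*} [MulZeroClass R] [NoZeroDivisors R]
    {v : m → R} {w : p → R} (hv : v ≠ 0) (hw : w ≠ 0) :
    (fun q : m × p => v q.1 * w q.2) ≠ 0 := by
  obtain ⟨i, hi⟩ := Function.ne_iff.mp hv
  obtain ⟨k, hk⟩ := Function.ne_iff.mp hw
  exact Function.ne_iff.mpr ⟨(i, k), mul_ne_zero hi hk⟩

section KroneckerEigenvectors

variable {R l m n p : Type*} [Fintype m] [Fintype p]

section CommSemiring

variable [CommSemiring R]

theorem kronecker_mulVec_kronecker (A : Matrix l m R) (B : Matrix n p R) (v : m → R)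
    (w : p → R) :
    (A ⊗ₖ B) *ᵥ (fun q => v q.1 * w q.2) = fun q => (A *ᵥ v) q.1 * (B *ᵥ w) q.2 := by
  ext ⟨i, k⟩
  simp only [mulVec, dotProduct, Fintype.sum_prod_type, kronecker_apply, Finset.sum_mul_sum]
  exact Finset.sum_congr rfl fun _ _ => Finset.sum_congr rfl fun _ _ => by ring

theorem kronecker_mulVec_kronecker_of_mulVec_eq_smul {A : Matrix m m R} {B : Matrix p p R}
    {v : m → R} {w : p → R} {a b : R} (hA : A *ᵥ v = a • v) (hB : B *ᵥ w = b • w) :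
    (A ⊗ₖ B) *ᵥ (fun q => v q.1 * w q.2) = (a * b) • fun q => v q.1 * w q.2 := by
  rw [kronecker_mulVec_kronecker, hA, hB]
  ext q
  simp only [Pi.smul_apply, smul_eq_mul]
  ring

theorem diagonal_mulVec_single_one [DecidableEq p] (d : p → R) (k : p) :
    diagonal d *ᵥ Pi.single k 1 = d k • Pi.single k (1 : R) := by
  rw [diagonal_mulVec_single, ← Pi.single_smul', smul_eq_mul]

end CommSemiring

variable [CommRing R] [DecidableEq m] [DecidableEq p]

theorem one_kronecker_sub_smul_kronecker_one_mulVec {A : Matrix m m R} {B : Matrix p p R}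
    {a b : R} {v : m → R} {w : p → R} (hA : A *ᵥ v = a • v) (hB : B *ᵥ w = b • w) (c : R) :
    ((1 : Matrix m m R) ⊗ₖ B - c • (A ⊗ₖ (1 : Matrix p p R))) *ᵥ
        (fun q => v q.1 * w q.2) =
      (b - c * a) • fun q => v q.1 * w q.2 := by
  have hv : (1 : Matrix m m R) *ᵥ v = (1 : R) • v := by rw [one_mulVec, one_smul]
  have hw : (1 : Matrix p p R) *ᵥ w = (1 : R) • w := by rw [one_mulVec, one_smul]
  rw [sub_mulVec, smul_mulVec, kronecker_mulVec_kronecker_of_mulVec_eq_smul hv hB,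
    kronecker_mulVec_kronecker_of_mulVec_eq_smul hA hw, smul_smul, ← sub_smul, one_mul,
    mul_one]

end KroneckerEigenvectors

theorem map_one_kronecker_diagonal_sub_smul_kronecker_one {m p : Type*} [DecidableEq m]
    [DecidableEq p] (A : Matrix m m ℝ) (d : p → ℝ) (c : ℝ) :
    ((1 : Matrix m m ℝ) ⊗ₖ diagonal d - c • (A ⊗ₖ (1 : Matrix p p ℝ))).map
        (fun x => (x : ℂ)) =
      (1 : Matrix m m ℂ) ⊗ₖ diagonal (fun k => (d k : ℂ)) -
        (c : ℂ) • (A.map (fun x => (x : ℂ)) ⊗ₖ (1 : Matrix p p ℂ)) := by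
  ext ⟨i, k⟩ ⟨j, k'⟩
  simp only [map_apply, sub_apply, smul_apply, kronecker_apply, one_apply, diagonal_apply]
  split_ifs <;> simp

end Matrix

theorem mem_specC_one_kronecker_diagonal_sub_smul_kronecker_one {m p : Type} [Fintype m]
    [DecidableEq m] [Fintype p] [DecidableEq p] {A : Matrix m m ℝ} {a : ℂ} {v : m → ℂ}
    (hv : v ≠ 0) (hA : A.map (fun x => (x : ℂ)) *ᵥ v = a • v) (d : p → ℝ) (c : ℝ) (k : p) :
    (d k : ℂ) - c * a ∈
      specC ((1 : Matrix m m ℝ) ⊗ₖ diagonal d - c • (A ⊗ₖ (1 : Matrix p p ℝ))) := by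
  rw [specC, map_one_kronecker_diagonal_sub_smul_kronecker_one]
  exact mem_spectrum_of_mulVec_eq_smul
    (kronecker_vec_ne_zero hv (Pi.single_ne_zero_iff.2 one_ne_zero))
    (one_kronecker_sub_smul_kronecker_one_mulVec hA (diagonal_mulVec_single_one _ k) c)

theorem naive_observer_never_schur_general (N : ℕ) (hN : 0 < N)
    (H : Matrix (Fin N) (Fin N) ℝ) (μ : ℝ) :
    ∃ z ∈ specC ((1 : Matrix (Fin N) (Fin N) ℝ) ⊗ₖ (Matrix.diagonal ![1, -1]) -
        μ • (H ⊗ₖ (1 : Matrix (Fin 2) (Fin 2) ℝ))),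
      1 ≤ ‖z‖ := by
  have : Nonempty (Fin N) := ⟨⟨0, hN⟩⟩
  obtain ⟨a, v, hv, hHv⟩ := exists_mulVec_eq_smul (H.map fun x => (x : ℂ))
  have hdist : 2 * 1 ≤ dist (1 : ℂ) (-1) := by norm_num [dist_eq_norm]
  rcases le_dist_or_le_dist_of_two_mul_le_dist hdist (μ * a) with h | h
  · exact ⟨_, mem_specC_one_kronecker_diagonal_sub_smul_kronecker_one hv hHv _ μ 0,
      by simpa [dist_eq_norm] using h⟩
  · exact ⟨_, mem_specC_one_kronecker_diagonal_sub_smul_kronecker_one hv hHv _ μ 1,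
      by simpa [dist_eq_norm] using h⟩

/-- For `S0 = diag(1, −1)` and any real symmetric positive definite `H`,
for every real `μ` the matrix `I_N ⊗ S0 − μ (H ⊗ I_2)` has a complex eigenvalue of
modulus at least `1`; i.e. no gain `μ` makes it Schur. -/
theorem naive_observer_never_schur (N : ℕ) (hN : 0 < N)
    (H : Matrix (Fin N) (Fin N) ℝ) (hsymm : H.IsSymm) (hpd : H.PosDef) (μ : ℝ) :
    ∃ z ∈ specC ((1 : Matrix (Fin N) (Fin N) ℝ) ⊗ₖ (Matrix.diagonal ![1, -1]) -
        μ • (H ⊗ₖ (1 : Matrix (Fin 2) (Fin 2) ℝ))),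
      1 ≤ ‖z‖ :=
  naive_observer_never_schur_general N hN H μ
end
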